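/- Assume n ≥ 2, u* ∈ bd K_{n+1}, H ∩ int K_{n+1} = ∅, and H ∩ bd K_{n+1} = {u*}. Then for every u ∈ H with u ≠ u*, one has −û ∉ K_{n+1}. -/

import Mathlib

/-- Euclidean norm of the tail `x₁` of `x = (x₀; x₁) ∈ ℝ × ℝⁿ`. -/
noncomputable def tailNorm {n : ℕ} (x : EuclideanSpace ℝ (Fin (n + 1))) : ℝ :=
  Real.sqrt (∑ i : Fin n, x i.succ ^ 2)

/-- The second-order cone `K_{n+1} = {(x₀; x₁) : ‖x₁‖ ≤ x₀}`. -/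
def soc (n : ℕ) : Set (EuclideanSpace ℝ (Fin (n + 1))) :=
  {x | tailNorm x ≤ x 0}

/-- The boundary of the second-order cone: `{(x₀; x₁) : ‖x₁‖ = x₀}`. -/
def socBd (n : ℕ) : Set (EuclideanSpace ℝ (Fin (n + 1))) :=
  {x | tailNorm x = x 0}

/-- The interior of the second-order cone: `{(x₀; x₁) : ‖x₁‖ < x₀}`. -/
def socInt (n : ℕ) : Set (EuclideanSpace ℝ (Fin (n + 1))) :=
  {x | tailNorm x < x 0}

/-- `x̂ = (x₀; −x₁)` for `x = (x₀; x₁)`. -/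
def socHat {n : ℕ} (x : EuclideanSpace ℝ (Fin (n + 1))) : EuclideanSpace ℝ (Fin (n + 1)) :=
  WithLp.toLp 2 (fun i => if i = 0 then x 0 else -(x i))

/-- `B t` viewed as an element of Euclidean space. -/
def mvE {m p : ℕ} (B : Matrix (Fin m) (Fin p) ℝ) (t : Fin p → ℝ) : EuclideanSpace ℝ (Fin m) :=
  WithLp.toLp 2 (fun i => B.mulVec t i)

/-- A Euclidean vector viewed as a plain function. -/
def toFun {m : ℕ} (x : EuclideanSpace ℝ (Fin m)) : Fin m → ℝ := x

/-!
Since `‖·‖` is invariant under `x₁ ↦ -x₁`, the hypothesis `-û ∈ K` says `-u ∈ K`. Write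
`u = u* + B t`. The point `v = u* - B t = 2u* - u` lies in `H`, and in the convex cone `K` as the
sum of `u*, u* ∈ K` and `-u ∈ K`. As `H` misses `int K`, `v ∈ bd K`, so `v = u*`, i.e. `B t = 0`
and `u = u*`.
-/

def socTail {n : ℕ} (x : EuclideanSpace ℝ (Fin (n + 1))) : EuclideanSpace ℝ (Fin n) :=
  WithLp.toLp 2 (fun i => x i.succ)

lemma tailNorm_eq_norm_socTail {n : ℕ} (x : EuclideanSpace ℝ (Fin (n + 1))) :
    tailNorm x = ‖socTail x‖ := by
  simp [tailNorm, socTail, EuclideanSpace.norm_eq]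

lemma socTail_add {n : ℕ} (x y : EuclideanSpace ℝ (Fin (n + 1))) :
    socTail (x + y) = socTail x + socTail y := rfl

lemma socTail_neg {n : ℕ} (x : EuclideanSpace ℝ (Fin (n + 1))) :
    socTail (-x) = -socTail x := rfl

lemma socTail_socHat {n : ℕ} (x : EuclideanSpace ℝ (Fin (n + 1))) :
    socTail (socHat x) = -socTail x := by
  ext i
  simp [socTail, socHat, Fin.succ_ne_zero]

lemma add_mem_soc {n : ℕ} {x y : EuclideanSpace ℝ (Fin (n + 1))}
    (hx : x ∈ soc n) (hy : y ∈ soc n) : x + y ∈ soc n := by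
  simp only [soc, Set.mem_ofPred_eq, tailNorm_eq_norm_socTail, socTail_add] at *
  calc ‖socTail x + socTail y‖ ≤ ‖socTail x‖ + ‖socTail y‖ := norm_add_le _ _
    _ ≤ x 0 + y 0 := add_le_add hx hy
    _ = (x + y) 0 := rfl

lemma neg_mem_soc_iff_neg_socHat_mem {n : ℕ} (x : EuclideanSpace ℝ (Fin (n + 1))) :
    -x ∈ soc n ↔ -socHat x ∈ soc n := by
  simp only [soc, Set.mem_ofPred_eq, tailNorm_eq_norm_socTail, socTail_neg, socTail_socHat,
    norm_neg]
  simp [socHat]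

lemma socBd_subset_soc (n : ℕ) : socBd n ⊆ soc n :=
  fun _ hx => le_of_eq hx

lemma mem_socBd_or_mem_socInt {n : ℕ} {x : EuclideanSpace ℝ (Fin (n + 1))} (hx : x ∈ soc n) :
    x ∈ socBd n ∨ x ∈ socInt n :=
  hx.eq_or_lt

lemma mvE_neg {m p : ℕ} (B : Matrix (Fin m) (Fin p) ℝ) (t : Fin p → ℝ) :
    mvE B (-t) = -mvE B t := by
  ext i
  simp [mvE, Matrix.mulVec_neg]

theorem stmt3_general (n p : ℕ)
    (B : Matrix (Fin (n + 1)) (Fin p) ℝ)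
    (ustar : EuclideanSpace ℝ (Fin (n + 1))) (hustar : ustar ∈ socBd n)
    (H : Set (EuclideanSpace ℝ (Fin (n + 1))))
    (hH : H = {u | ∃ t : Fin p → ℝ, u = ustar + mvE B t})
    (hdisj : H ∩ socInt n = ∅)
    (hsingle : H ∩ socBd n = {ustar}) :
    ∀ u ∈ H, u ≠ ustar → -(socHat u) ∉ soc n := by
  intro u huH hne hK
  obtain ⟨t, rfl⟩ : ∃ t : Fin p → ℝ, u = ustar + mvE B t := by
    rwa [hH] at huH
  have hvH : ustar + mvE B (-t) ∈ H := hH ▸ ⟨-t, rfl⟩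
  have hvK : ustar + mvE B (-t) ∈ soc n := by
    have hu : ustar ∈ soc n := socBd_subset_soc n hustar
    have hv : ustar + mvE B (-t) = ustar + ustar + -(ustar + mvE B t) := by
      rw [mvE_neg]; abel
    rw [hv]
    exact add_mem_soc (add_mem_soc hu hu) ((neg_mem_soc_iff_neg_socHat_mem _).2 hK)
  rcases mem_socBd_or_mem_socInt hvK with hbd | hint
  · have hv : ustar + mvE B (-t) ∈ ({ustar} : Set _) := hsingle ▸ ⟨hvH, hbd⟩
    rw [Set.mem_singleton_iff, mvE_neg, add_eq_left, neg_eq_zero] at hv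
    exact hne (by rw [hv, add_zero])
  · exact (hdisj ▸ ⟨hvH, hint⟩ : ustar + mvE B (-t) ∈ (∅ : Set _))

/-- Assume `n ≥ 2`, `u* ∈ bd K_{n+1}`, `H ∩ int K_{n+1} = ∅`, and `H ∩ bd K_{n+1} = {u*}`,
where `H = {u* + B t : t ∈ ℝ^p}` with `Bᵀ B = I_p`. Then for every `u ∈ H` with `u ≠ u*`,
one has `−û ∉ K_{n+1}`. -/
theorem stmt3 (n p : ℕ) (hn : 2 ≤ n)
    (B : Matrix (Fin (n + 1)) (Fin p) ℝ) (hB : B.transpose * B = 1)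
    (ustar : EuclideanSpace ℝ (Fin (n + 1))) (hustar : ustar ∈ socBd n)
    (H : Set (EuclideanSpace ℝ (Fin (n + 1))))
    (hH : H = {u | ∃ t : Fin p → ℝ, u = ustar + mvE B t})
    (hdisj : H ∩ socInt n = ∅)
    (hsingle : H ∩ socBd n = {ustar}) :
    ∀ u ∈ H, u ≠ ustar → -(socHat u) ∉ soc n :=
  stmt3_general n p B ustar hustar H hH hdisj hsingle
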